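/- arXiv:1411.4347 — 6 statements merged into one kernel-verified Lean document; each statement's English description precedes it below -/
import Mathlib

section
/- Let f(x) = x^{2g+1} - b·x - (p·c)/4 ∈ ℚ[x] be a Mori trinomial. Then f(x) is irreducible over the field ℚ₂ of 2-adic numbers, and hence irreducible over ℚ. Moreover, the splitting field extension ℚ(R_f)/ℚ (where R_f is the set of roots of f) is ramified at the prime 2. -/
/-!
Let `n = 2g + 1` and let `v` be a valuation with `v 2 < 1`. Odd integers are `v`-units, so
the constant term `p c / 4` of `f` has `v = v 2 ^ (-2) > 1` and dominates `b x`; hence every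
root `a` satisfies `v a ^ n = v 2 ^ (-2)`: the Newton polygon of `f` at `2` is one segment of
slope `-2 / n`. Over `ℚ₂`, the constant term of a monic factor of degree `d` is the product of
its roots and its valuation is an integral power `k` of `v 2`, so `k n = -2 d`; as `n` is odd,
`n ∣ d`, and `f` is irreducible over `ℚ₂`, hence over `ℚ`. At a prime `Q` above `2` with
ramification index `e`, `v_Q 2 = exp (-e)` gives `n ∣ 2 e`, so `n ∣ e` and `e > 1`.
-/

open Polynomial NumberField

noncomputable section

/-- `(g,p,b,c)` is a Mori quadruple: `g` is a positive integer, `p` an odd prime such that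
every prime divisor of `g` divides `(p-1)/2`, `b mod p` is a primitive root of `𝔽_p`,
`c` is odd, and `gcd(b,c) = gcd(b,2g+1) = gcd(c,g) = 1`. -/
def IsMoriQuadruple (g p : ℕ) (b c : ℤ) : Prop :=
  0 < g ∧ p.Prime ∧ Odd p ∧
    (∀ q : ℕ, q.Prime → q ∣ g → q ∣ (p - 1) / 2) ∧
    orderOf (b : ZMod p) = p - 1 ∧
    Odd c ∧ IsCoprime b c ∧ IsCoprime b (2 * (g : ℤ) + 1) ∧ IsCoprime c (g : ℤ)

/-- The Mori trinomial `f(x) = x^(2g+1) - b·x - (p·c)/4 ∈ ℚ[x]`. -/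
def moriPoly (g p : ℕ) (b c : ℤ) : ℚ[X] :=
  X ^ (2 * g + 1) - C (b : ℚ) * X - C ((p : ℚ) * (c : ℚ) / 4)

open WithZero in
theorem WithZero.dvd_of_pow_eq_exp {x : ℤᵐ⁰} {n : ℕ} {k : ℤ} (h : x ^ n = exp k) :
    (n : ℤ) ∣ k := by
  rcases eq_or_ne x 0 with rfl | hx
  · rcases n with _ | n
    · simpa using exp_eq_one.1 h.symm
    · exact absurd h.symm (by simp)
  · rw [← exp_log hx, ← exp_nsmul, exp_inj] at h
    exact ⟨log x, by rw [← h, nsmul_eq_mul]⟩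

namespace Valuation

variable {R L Γ : Type*} [LinearOrderedCommGroupWithZero Γ]

section Ring

variable [Ring R] (v : Valuation R Γ)

theorem map_natCast_le_one (n : ℕ) : v n ≤ 1 := by
  induction n with
  | zero => simp
  | succ n ih => rw [Nat.cast_succ]; exact v.map_add_le ih v.map_one.le

theorem map_intCast_le_one (n : ℤ) : v n ≤ 1 := by
  cases n with
  | ofNat n => simpa using v.map_natCast_le_one n
  | negSucc n => rw [Int.cast_negSucc, v.map_neg]; exact v.map_natCast_le_one _

theorem map_intCast_eq_one_of_isCoprime {a b : ℤ} (hab : IsCoprime a b) (hb : v b < 1) :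
    v a = 1 := by
  refine (v.map_intCast_le_one a).antisymm (not_lt.1 fun ha => ?_)
  obtain ⟨x, y, hxy⟩ := hab
  have hlt : v ((x * a + y * b : ℤ) : R) < 1 := by
    push_cast
    refine v.map_add_lt ?_ ?_ <;> rw [v.map_mul]
    · exact (mul_le_of_le_one_left' (v.map_intCast_le_one x)).trans_lt ha
    · exact (mul_le_of_le_one_left' (v.map_intCast_le_one y)).trans_lt hb
  simp [hxy] at hlt

end Ring

variable [Field L] (v : Valuation L Γ)

theorem pow_eq_of_pow_eq_mul_add {a B C : L} {n : ℕ} (hn : 2 ≤ n)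
    (ha : a ^ n = B * a + C) (hB : v B ≤ 1) (hC : 1 < v C) : v a ^ n = v C := by
  have ha1 : 1 < v a := by
    refine not_le.1 fun hle => hC.not_ge ?_
    have hBa : v (B * a) < v C := by
      rw [v.map_mul]; exact (mul_le_one' hB hle).trans_lt hC
    rw [← v.map_add_eq_of_lt_right hBa, ← ha, v.map_pow]
    exact pow_le_one' hle n
  have hBa : v (B * a) < v (a ^ n) := by
    rw [v.map_mul, v.map_pow]
    calc v B * v a ≤ v a := mul_le_of_le_one_left' hB
      _ < v a ^ n := lt_self_pow₀ ha1 (by omega)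
  rw [← v.map_pow, eq_sub_of_add_eq' ha.symm, v.map_sub_eq_of_lt_left hBa]

theorem map_algebraMap_coeff_zero_eq_prod_aroots {K : Type*} [CommRing K] [Algebra K L]
    {f : K[X]} (hf : f.Monic) (hsplit : (f.map (algebraMap K L)).Splits) :
    v (algebraMap K L (f.coeff 0)) = ((f.aroots L).map v).prod := by
  rw [coeff_zero_eq_aeval_zero', hsplit.aeval_eq_prod_aroots_of_monic hf, map_multiset_prod,
    Multiset.map_map]
  congr 1
  exact Multiset.map_congr rfl fun a _ => by simp

end Valuation

section PadicValuation

variable {p : ℕ} [Fact p.Prime]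

theorem Padic.exists_valuationSubring_dominating_padicInt (L : Type*) [Field L]
    [Algebra ℚ_[p] L] :
    ∃ A : ValuationSubring L, (∀ x : ℤ_[p], A.valuation (algebraMap ℚ_[p] L x) ≤ 1) ∧
      A.valuation (p : L) < 1 := by
  obtain ⟨A, hmem, hloc⟩ :=
    IsLocalRing.exists_factor_valuationRing ((algebraMap ℚ_[p] L).comp PadicInt.Coe.ringHom)
  refine ⟨A, fun x => (A.valuation_le_one_iff _).2 (hmem x), ?_⟩
  set j := ((algebraMap ℚ_[p] L).comp PadicInt.Coe.ringHom).codRestrict A.toSubring hmem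
  have hp : A.valuation (j p : L) < 1 := by
    refine (A.valuation_lt_one_or_eq_one _).resolve_right fun h => ?_
    exact PadicInt.not_isUnit_iff.2 ((PadicInt.norm_lt_one_iff_dvd _).2 dvd_rfl)
      (isUnit_of_map_unit j _ ((A.valuation_eq_one_iff _).2 h))
  simpa [j] using hp

variable {L Γ : Type*} [Field L] [Algebra ℚ_[p] L] [LinearOrderedCommGroupWithZero Γ]

theorem Valuation.map_algebraMap_padic_eq_zpow (v : Valuation L Γ)
    (hint : ∀ x : ℤ_[p], v (algebraMap ℚ_[p] L x) ≤ 1) {z : ℚ_[p]} (hz : z ≠ 0) :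
    v (algebraMap ℚ_[p] L z) = v (p : L) ^ z.valuation := by
  have hunit : ∀ u : ℤ_[p]ˣ, v (algebraMap ℚ_[p] L (u : ℤ_[p])) = 1 := fun u => by
    refine (hint u).antisymm (not_lt.1 fun hlt => ?_)
    have := congrArg (fun x : ℤ_[p] => v (algebraMap ℚ_[p] L x)) u.mul_inv
    simp only [PadicInt.coe_mul, map_mul, PadicInt.coe_one, map_one] at this
    exact (mul_lt_one_of_lt_of_le hlt (hint _)).ne this
  have hp : (p : ℚ_[p]) ≠ 0 := by exact_mod_cast (Fact.out : p.Prime).ne_zero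
  have hnorm : ‖z / (p : ℚ_[p]) ^ z.valuation‖ = 1 := by
    rw [norm_div, norm_zpow, Padic.norm_p, Padic.norm_eq_zpow_neg_valuation hz, inv_zpow,
      ← zpow_neg, div_self (zpow_ne_zero _ (by simpa using hp))]
  have hz : z = (PadicInt.mkUnits hnorm : ℤ_[p]) * (p : ℚ_[p]) ^ z.valuation := by
    rw [PadicInt.mkUnits_eq, div_mul_cancel₀ _ (zpow_ne_zero _ hp)]
  conv_lhs => rw [hz]
  rw [map_mul, v.map_mul, hunit, one_mul, map_zpow₀, map_zpow₀, map_natCast]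

end PadicValuation

namespace Padic

variable {p : ℕ} [Fact p.Prime]

/-- Every root `a` of `F`, measured by any valuation `v` dominating `ℤ_[p]` on any extension of
`ℚ_[p]`, satisfies `v a ^ deg F = v p ^ m`: the Newton polygon of `F` is a single segment of
slope `m / deg F`. -/
def IsPureOfSlope (F : ℚ_[p][X]) (m : ℤ) : Prop :=
  ∀ (L : Type) [Field L] [Algebra ℚ_[p] L] (A : ValuationSubring L),
    (∀ x : ℤ_[p], A.valuation (algebraMap ℚ_[p] L x) ≤ 1) → A.valuation (p : L) < 1 →
      ∀ a : L, aeval a F = 0 → A.valuation a ^ F.natDegree = A.valuation (p : L) ^ m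

namespace IsPureOfSlope

variable {F : ℚ_[p][X]} {m : ℤ}

/-- The product of the roots of `f` is `± f.coeff 0`, whose valuation is an integral power of
`v p`. -/
theorem natDegree_dvd_mul (hF : IsPureOfSlope F m) (hn : F.natDegree ≠ 0) {f : ℚ_[p][X]}
    (hf : f.Monic) (hfF : f ∣ F) : (F.natDegree : ℤ) ∣ m * f.natDegree := by
  let L := f.SplittingField
  obtain ⟨A, hint, hp⟩ := exists_valuationSubring_dominating_padicInt (p := p) L
  set v := A.valuation
  set t := v (p : L)
  have hroot : ∀ a ∈ f.aroots L, v a ^ F.natDegree = t ^ m := fun a ha => by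
    obtain ⟨r, rfl⟩ := hfF
    exact hF L A hint hp a (by rw [map_mul, (mem_aroots.1 ha).2, zero_mul])
  have hcard : Multiset.card (f.aroots L) = f.natDegree := by
    rw [aroots_def, ← (SplittingField.splits f).natDegree_eq_card_roots, hf.natDegree_map]
  have hprod : v (algebraMap ℚ_[p] L (f.coeff 0)) ^ F.natDegree = t ^ (m * f.natDegree) := by
    rw [v.map_algebraMap_coeff_zero_eq_prod_aroots hf (SplittingField.splits f),
      ← Multiset.prod_map_pow, Multiset.map_congr rfl hroot, Multiset.map_const',
      hcard, Multiset.prod_replicate, zpow_mul, zpow_natCast]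
  have ht : 0 < t := by
    rw [zero_lt_iff, v.ne_zero_iff]
    exact_mod_cast (Fact.out : p.Prime).ne_zero
  have hf0 : f.coeff 0 ≠ 0 := by
    rintro h
    rw [h, map_zero, v.map_zero, zero_pow hn] at hprod
    exact zpow_ne_zero _ ht.ne' hprod.symm
  rw [v.map_algebraMap_padic_eq_zpow hint hf0, ← zpow_natCast, ← zpow_mul] at hprod
  exact ⟨(f.coeff 0).valuation, by linarith [zpow_right_injective₀ ht hp.ne hprod]⟩

theorem irreducible (hF : IsPureOfSlope F m) (hmon : F.Monic) (hn : F.natDegree ≠ 0)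
    (hm : IsCoprime (F.natDegree : ℤ) m) : Irreducible F := by
  refine hmon.irreducible_iff_natDegree.2 ⟨fun h => hn (by simp [h]), fun f g hf hg hfg => ?_⟩
  have hdvd : ∀ {f : ℚ_[p][X]}, f.Monic → f ∣ F → F.natDegree ∣ f.natDegree :=
    fun hf hfF => Int.natCast_dvd_natCast.1 <|
      hm.dvd_of_dvd_mul_left (hF.natDegree_dvd_mul hn hf hfF)
  have hdeg := hf.natDegree_mul hg
  rw [hfg] at hdeg
  obtain ⟨k, hk⟩ := hdvd hf (hfg ▸ dvd_mul_right f g)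
  obtain ⟨l, hl⟩ := hdvd hg (hfg ▸ dvd_mul_left g f)
  have hkl : k + l = 1 := Nat.eq_of_mul_eq_mul_left (Nat.pos_of_ne_zero hn) <| by
    rw [mul_add, ← hk, ← hl, ← hdeg, mul_one]
  rcases Nat.add_eq_one_iff.1 hkl with ⟨rfl, -⟩ | ⟨-, rfl⟩
  · exact .inl (by simpa using hk)
  · exact .inr (by simpa using hl)

end IsPureOfSlope

end Padic

section MoriPoly

variable {g p : ℕ} {b c : ℤ}

theorem moriPoly_eq_X_pow_sub : moriPoly g p b c =
    X ^ (2 * g + 1) - (C (b : ℚ) * X + C ((p : ℚ) * (c : ℚ) / 4)) := by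
  rw [moriPoly, sub_sub]

theorem moriPoly_monic (hg : 0 < g) : (moriPoly g p b c).Monic := by
  rw [moriPoly_eq_X_pow_sub]
  exact monic_X_pow_sub (degree_linear_le.trans_lt (by norm_cast; omega))

theorem natDegree_moriPoly (hg : 0 < g) : (moriPoly g p b c).natDegree = 2 * g + 1 := by
  rw [moriPoly_eq_X_pow_sub, natDegree_sub_eq_left_of_natDegree_lt] <;>
    rw [natDegree_X_pow]
  exact natDegree_linear_le.trans_lt (by omega)

theorem Valuation.pow_eq_of_eval₂_moriPoly_eq_zero {L Γ : Type*} [Field L]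
    [LinearOrderedCommGroupWithZero Γ] (v : Valuation L Γ) (ψ : ℚ →+* L) (hg : 0 < g)
    (hp : Odd p) (hc : Odd c) (hv2 : v 2 < 1) {a : L} (ha : (moriPoly g p b c).eval₂ ψ a = 0) :
    v a ^ (2 * g + 1) = v 2 ^ (-2 : ℤ) := by
  have hv2₀ : 0 < v 2 := by
    rw [zero_lt_iff, v.ne_zero_iff]
    simpa using ψ.injective.ne (two_ne_zero (α := ℚ))
  have hodd : ∀ m : ℤ, Odd m → v m = 1 := by
    rintro m ⟨k, rfl⟩
    exact v.map_intCast_eq_one_of_isCoprime (b := 2) ⟨1, -k, by ring⟩ (by simpa using hv2)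
  have hC : v ((p : L) * c / 4) = v 2 ^ (-2 : ℤ) := by
    rw [map_div₀, v.map_mul, ← Int.cast_natCast, hodd _ (by exact_mod_cast hp), hodd c hc,
      show (4 : L) = 2 ^ 2 by norm_num, v.map_pow]
    simp [zpow_neg]
  rw [← hC]
  refine v.pow_eq_of_pow_eq_mul_add (B := b) (by omega) ?_ (v.map_intCast_le_one b) ?_
  · rw [moriPoly, eval₂_sub, eval₂_sub, eval₂_mul, eval₂_pow, eval₂_X, eval₂_C,
      eval₂_C, map_intCast, map_div₀, map_mul, map_natCast, map_intCast, map_ofNat] at ha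
    linear_combination ha
  · rw [hC]
    exact one_lt_zpow_of_neg₀ hv2₀ hv2 (by norm_num)

theorem isPureOfSlope_map_moriPoly (hg : 0 < g) (hp : Odd p) (hc : Odd c) :
    Padic.IsPureOfSlope ((moriPoly g p b c).map (algebraMap ℚ ℚ_[2])) (-2) := by
  intro L _ _ A _ hv2 a ha
  rw [(moriPoly_monic hg).natDegree_map, natDegree_moriPoly hg, Nat.cast_ofNat]
  rw [Nat.cast_ofNat] at hv2
  rw [aeval_def, eval₂_map] at ha
  exact A.valuation.pow_eq_of_eval₂_moriPoly_eq_zero _ hg hp hc hv2 ha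

theorem irreducible_map_moriPoly_padic (hg : 0 < g) (hp : Odd p) (hc : Odd c) :
    Irreducible ((moriPoly g p b c).map (algebraMap ℚ ℚ_[2])) := by
  have hdeg : ((moriPoly g p b c).map (algebraMap ℚ ℚ_[2])).natDegree = 2 * g + 1 := by
    rw [(moriPoly_monic hg).natDegree_map, natDegree_moriPoly hg]
  refine (isPureOfSlope_map_moriPoly hg hp hc).irreducible ((moriPoly_monic hg).map _)
    (by omega) ?_
  rw [hdeg]
  exact ⟨1, g, by push_cast; ring⟩

open IsDedekindDomain WithZero in
theorem dvd_ramificationIdx'_of_aeval_moriPoly_eq_zero {K : Type*} [Field K] [NumberField K]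
    (hg : 0 < g) (hp : Odd p) (hc : Odd c) {α : K} (hα : aeval α (moriPoly g p b c) = 0)
    (Q : Ideal (𝓞 K)) [Q.IsPrime] [Q.LiesOver (Ideal.span {(2 : ℤ)})] :
    2 * g + 1 ∣ Ideal.ramificationIdx' (Ideal.span {(2 : ℤ)}) Q := by
  have h2 : Ideal.span {(2 : ℤ)} ≠ ⊥ := by simp
  let v : HeightOneSpectrum ℤ :=
    ⟨_, (Ideal.span_singleton_prime two_ne_zero).2 Int.prime_two, h2⟩
  let w : HeightOneSpectrum (𝓞 K) := ⟨Q, ‹_›, Ideal.ne_bot_of_liesOver_of_ne_bot h2 Q⟩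
  set e := Ideal.ramificationIdx' (Ideal.span {(2 : ℤ)}) Q
  have he : e ≠ 0 := Ideal.IsDedekindDomain.ramificationIdx'_ne_zero_of_liesOver Q h2
  have hw2 : w.valuation K 2 = exp (-(e : ℤ)) := by
    have hv2 : v.valuation ℚ 2 = exp (-1) := by
      rw [← map_ofNat (algebraMap ℤ ℚ) 2, HeightOneSpectrum.valuation_of_algebraMap,
        HeightOneSpectrum.intValuation_singleton v two_ne_zero rfl]
    rw [← map_ofNat (algebraMap ℚ K) 2, ← HeightOneSpectrum.valuation_liesOver K v w, hv2,
      ← exp_nsmul, nsmul_eq_mul, mul_neg_one]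
  have hroot := (w.valuation K).pow_eq_of_eval₂_moriPoly_eq_zero (algebraMap ℚ K) hg hp hc
    (by rw [hw2, ← exp_zero, exp_lt_exp]; omega) hα
  rw [hw2, ← exp_zsmul] at hroot
  have hdvd : 2 * g + 1 ∣ 2 * e := by
    have := WithZero.dvd_of_pow_eq_exp hroot
    rw [smul_eq_mul, neg_mul_neg] at this
    exact_mod_cast this
  exact (Nat.coprime_two_right.2 (odd_two_mul_add_one g)).dvd_of_dvd_mul_left hdvd

end MoriPoly

/-- Theorem (Mori): a Mori trinomial is irreducible over `ℚ₂`, hence over `ℚ`; moreover the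
splitting field extension `ℚ(R_f)/ℚ` is ramified at the prime `2`. -/
theorem mori_trinomial_irreducible_and_ramified_at_two
    (g p : ℕ) (b c : ℤ) (h : IsMoriQuadruple g p b c) :
    Irreducible ((moriPoly g p b c).map (algebraMap ℚ ℚ_[2])) ∧
    Irreducible (moriPoly g p b c) ∧
    ∃ Q : Ideal (𝓞 (moriPoly g p b c).SplittingField), Q.IsMaximal ∧
      (2 : 𝓞 (moriPoly g p b c).SplittingField) ∈ Q ∧
      1 < Ideal.ramificationIdx'
            (Ideal.span {(2 : ℤ)}) Q := by
  obtain ⟨hg, -, hp, -, -, hc, -⟩ := h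
  have hirr := irreducible_map_moriPoly_padic (b := b) hg hp hc
  refine ⟨hirr, (moriPoly_monic hg).irreducible_of_irreducible_map _ _ hirr, ?_⟩
  let N := (moriPoly g p b c).SplittingField
  have : NumberField N := ⟨⟩
  have : (Ideal.span {(2 : ℤ)}).IsMaximal :=
    PrincipalIdealRing.isMaximal_of_irreducible Int.prime_two.irreducible
  obtain ⟨Q, hQ, hQ2⟩ :=
    Ideal.exists_maximal_ideal_liesOver_of_isIntegral (S := 𝓞 N) (Ideal.span {(2 : ℤ)})
  have h2Q : (2 : 𝓞 N) ∈ Q := by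
    simpa using (Q.mem_of_liesOver _ 2).1 (Ideal.mem_span_singleton_self (2 : ℤ))
  obtain ⟨α, hα⟩ := (SplittingField.splits (moriPoly g p b c)).exists_eval_eq_zero <| by
    rw [degree_map]
    exact (natDegree_pos_iff_degree_pos.1 (by rw [natDegree_moriPoly hg]; omega)).ne'
  have hdvd := dvd_ramificationIdx'_of_aeval_moriPoly_eq_zero hg hp hc
    (by rwa [aeval_def, ← eval_map]) Q
  have he := Ideal.IsDedekindDomain.ramificationIdx'_ne_zero_of_liesOver Q
    (p := Ideal.span {(2 : ℤ)}) (by simp)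
  exact ⟨Q, hQ, h2Q, by linarith [Nat.le_of_dvd (Nat.pos_of_ne_zero he) hdvd]⟩
end
end

section
/- Let f(x) = x^{2g+1} - b·x - (p·c)/4 ∈ ℤ[1/2][x] be a Mori trinomial. Then the reduction of f modulo p (well defined since p is odd, via ℤ[1/2]/pℤ[1/2] = 𝔽_p) equals x·(x^{2g} - b̄) in 𝔽_p[x], where b̄ = b mod p, and the degree-2g factor x^{2g} - b̄ is irreducible over 𝔽_p. -/
/-!
If `α` is a root of `Xⁿ - a` in an extension of `𝔽_q` and `a` generates `𝔽_q^*`, then `α` has order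
exactly `n (q - 1)`: the order of `αⁿ` is `q - 1`, and every prime of `n` already divides it. Hence
`n (q - 1) ∣ q^d - 1` for `d = [𝔽_q(α) : 𝔽_q]`, and lifting the exponent prime by prime gives
`n ∣ d`, so `d = n`. For the Mori trinomial, `n = 2g` and `q = p`; the reduction mod `p` itself is
immediate because `p` kills the constant term.
-/

open Polynomial

noncomputable section

/-- The reduction modulo `p` of the Mori trinomial `f = x^(2g+1) - b·x - (p·c)/4 ∈ ℤ[1/2][x]`:
since `p` is odd, `4` is invertible mod `p` and the constant term reduces to
`(p·c mod p)·(4 mod p)⁻¹`. -/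
def moriPolyMod (g p : ℕ) (b c : ℤ) (ℓ : ℕ) : (ZMod ℓ)[X] :=
  X ^ (2 * g + 1) - C (b : ZMod ℓ) * X
    - C ((p : ZMod ℓ) * (c : ZMod ℓ) * (4 : ZMod ℓ)⁻¹)

theorem Int.emultiplicity_pow_sub_one {q : ℕ} (hq : q.Prime) {x : ℤ} (hqx : (q : ℤ) ∣ x - 1)
    (h2 : q = 2 → 4 ∣ x - 1) (d : ℕ) :
    emultiplicity (q : ℤ) (x ^ d - 1) = emultiplicity (q : ℤ) (x - 1) + emultiplicity (q : ℤ) d := by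
  have hqx' : ¬(q : ℤ) ∣ x := fun h ↦
    (Nat.prime_iff_prime_int.mp hq).not_dvd_one (by simpa using Int.dvd_sub h hqx)
  rcases hq.eq_two_or_odd' with rfl | hodd
  · simpa using Int.two_pow_sub_pow' (y := 1) d (h2 rfl) hqx'
  · simpa [Int.natCast_emultiplicity] using
      Int.emultiplicity_pow_sub_pow hq hodd (y := 1) (by simpa using hqx) hqx' d

theorem Int.even_of_two_mul_sub_one_dvd_pow_sub_one {x : ℤ} (hx : Odd x) (hx1 : x ≠ 1) {d : ℕ}
    (h : 2 * (x - 1) ∣ x ^ d - 1) : Even d := by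
  rw [← mul_geom_sum, mul_comm 2, mul_dvd_mul_iff_left (sub_ne_zero.2 hx1),
    ← Nat.cast_two, ← ZMod.intCast_zmod_eq_zero_iff_dvd] at h
  push_cast [hx.intCast_zmod_two] at h
  simpa [ZMod.natCast_eq_zero_iff_even] using h

theorem Int.dvd_of_mul_sub_one_dvd_pow_sub_one {x : ℤ} (hx : x ≠ 1) {n d : ℕ}
    (hprime : ∀ q : ℕ, q.Prime → q ∣ n → (q : ℤ) ∣ x - 1) (h4 : 4 ∣ n → 4 ∣ x - 1)
    (h : (n : ℤ) * (x - 1) ∣ x ^ d - 1) : n ∣ d := by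
  refine (Nat.dvd_iff_prime_pow_dvd_dvd d n).2 fun q k hq hqk ↦ ?_
  rcases k.eq_zero_or_pos with rfl | hk
  · simp
  have hq' : Prime (q : ℤ) := Nat.prime_iff_prime_int.mp hq
  have hqx := hprime q hq ((dvd_pow_self q hk.ne').trans hqk)
  have hdvd : (q : ℤ) ^ k * (x - 1) ∣ x ^ d - 1 :=
    (mul_dvd_mul_right (by exact_mod_cast hqk) _).trans h
  by_cases hlte : q = 2 → 4 ∣ x - 1
  · have hfin : emultiplicity (q : ℤ) (x - 1) ≠ ⊤ :=
      finiteMultiplicity_iff_emultiplicity_ne_top.1 <|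
        Int.finiteMultiplicity_iff.2 ⟨by simpa using hq.ne_one, sub_ne_zero.2 hx⟩
    have := emultiplicity_le_emultiplicity_of_dvd_right (a := (q : ℤ)) hdvd
    rw [emultiplicity_mul hq', emultiplicity_pow_self_of_prime hq',
      Int.emultiplicity_pow_sub_one hq hqx hlte, add_comm] at this
    rw [pow_dvd_iff_le_emultiplicity, ← Int.natCast_emultiplicity]
    exact (WithTop.add_le_add_iff_left hfin).1 this
  -- Lifting the exponent fails at `2` when `4 ∤ x - 1`, but then `4 ∤ n`, so only `2 ∣ d` is needed.
  · push Not at hlte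
    obtain ⟨rfl, h4x⟩ := hlte
    obtain rfl : k = 1 := by
      by_contra hk1
      exact h4x (h4 ((pow_dvd_pow 2 (by omega : 2 ≤ k)).trans hqk))
    have hxodd : Odd x := by
      simpa using (even_iff_two_dvd.2 (by simpa using hqx) : Even (x - 1)).add_one
    simpa [even_iff_two_dvd] using
      Int.even_of_two_mul_sub_one_dvd_pow_sub_one hxodd hx (by simpa using hdvd)

theorem Nat.dvd_of_mul_sub_one_dvd_pow_sub_one {x n d : ℕ} (hx : 1 < x)
    (hprime : ∀ q : ℕ, q.Prime → q ∣ n → q ∣ x - 1) (h4 : 4 ∣ n → 4 ∣ x - 1)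
    (h : n * (x - 1) ∣ x ^ d - 1) : n ∣ d := by
  have hcast : ((x - 1 : ℕ) : ℤ) = x - 1 := Nat.cast_pred (by omega)
  refine Int.dvd_of_mul_sub_one_dvd_pow_sub_one (x := x) (by exact_mod_cast hx.ne')
    (fun q hq hqn ↦ hcast ▸ Int.natCast_dvd_natCast.2 (hprime q hq hqn))
    (fun h4n ↦ hcast ▸ Int.natCast_dvd_natCast.2 (h4 h4n)) ?_
  have := Int.natCast_dvd_natCast.2 h
  push_cast [Nat.one_le_pow _ _ (by omega : 0 < x), hx.le] at this
  exact this

theorem orderOf_eq_mul_orderOf_pow {G : Type*} [Monoid G] (x : G) {n : ℕ} (hn : n ≠ 0)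
    (hprime : ∀ q : ℕ, q.Prime → q ∣ n → q ∣ orderOf (x ^ n)) :
    orderOf x = n * orderOf (x ^ n) := by
  rw [orderOf_pow' x hn] at hprime ⊢
  rcases eq_or_ne (orderOf x) 0 with h0 | h0
  · simp [h0]
  obtain ⟨e, he⟩ := Nat.gcd_dvd_left (orderOf x) n
  obtain ⟨s, hs⟩ := Nat.gcd_dvd_right (orderOf x) n
  set t := (orderOf x).gcd n
  have ht : 0 < t := Nat.pos_of_ne_zero (Nat.gcd_ne_zero_left h0)
  have hdiv : orderOf x / t = e := by rw [he, Nat.mul_div_cancel_left e ht]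
  have hcop : e.Coprime s := by
    have : t * e.gcd s = t * 1 := by rw [← Nat.gcd_mul_left, ← he, ← hs, mul_one]
    exact Nat.eq_of_mul_eq_mul_left ht this
  have hs1 : s = 1 := Nat.eq_one_iff_not_exists_prime_dvd.2 fun q hq hqs ↦ hq.ne_one <|
    Nat.eq_one_of_dvd_coprimes hcop (hdiv ▸ hprime q hq (hs ▸ dvd_mul_of_dvd_right hqs t)) hqs
  rw [hdiv, he, hs, hs1, mul_one]

namespace FiniteField

variable {K : Type*} [Field K] [Fintype K] {a : K} {n : ℕ}

theorem orderOf_root_eq_mul (ha : orderOf a = Fintype.card K - 1) (hn : n ≠ 0)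
    (hprime : ∀ q : ℕ, q.Prime → q ∣ n → q ∣ Fintype.card K - 1)
    {L : Type*} [Field L] [Algebra K L] {α : L} (hα : α ^ n = algebraMap K L a) :
    orderOf α = n * (Fintype.card K - 1) := by
  have hpow : orderOf (α ^ n) = Fintype.card K - 1 := by
    rw [hα, ← ha]
    exact orderOf_injective (algebraMap K L : K →* L) (algebraMap K L).injective a
  rw [orderOf_eq_mul_orderOf_pow α hn (hpow ▸ hprime), hpow]

theorem dvd_natDegree_of_dvd_X_pow_sub_C (ha : orderOf a = Fintype.card K - 1) (hn : n ≠ 0)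
    (hprime : ∀ q : ℕ, q.Prime → q ∣ n → q ∣ Fintype.card K - 1)
    (h4 : 4 ∣ n → 4 ∣ Fintype.card K - 1) {f : K[X]} (hf : Irreducible f)
    (hfa : f ∣ X ^ n - C a) : n ∣ f.natDegree := by
  have : Fact (Irreducible f) := ⟨hf⟩
  have : Module.Finite K (AdjoinRoot f) := (AdjoinRoot.powerBasis hf.ne_zero).finite
  have : Finite (AdjoinRoot f) := Module.finite_of_finite K
  let : Fintype (AdjoinRoot f) := Fintype.ofFinite _
  have hcard : Fintype.card (AdjoinRoot f) = Fintype.card K ^ f.natDegree := by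
    rw [Module.card_eq_pow_finrank (K := K), (AdjoinRoot.powerBasis hf.ne_zero).finrank,
      AdjoinRoot.powerBasis_dim]
  have hroot : AdjoinRoot.root f ^ n = algebraMap K (AdjoinRoot f) a := by
    simpa [sub_eq_zero] using AdjoinRoot.mk_eq_zero.2 hfa
  have horder := orderOf_root_eq_mul ha hn hprime hroot
  have hroot0 : AdjoinRoot.root f ≠ 0 := ne_of_apply_ne orderOf <| by
    rw [horder, orderOf_zero]
    exact mul_ne_zero hn (Nat.sub_ne_zero_of_lt Fintype.one_lt_card)
  refine Nat.dvd_of_mul_sub_one_dvd_pow_sub_one Fintype.one_lt_card hprime h4 ?_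
  rw [← horder, ← hcard]
  exact orderOf_dvd_of_pow_eq_one (pow_card_sub_one_eq_one _ hroot0)

theorem X_pow_sub_C_irreducible_of_orderOf_eq (ha : orderOf a = Fintype.card K - 1) (hn : n ≠ 0)
    (hprime : ∀ q : ℕ, q.Prime → q ∣ n → q ∣ Fintype.card K - 1)
    (h4 : 4 ∣ n → 4 ∣ Fintype.card K - 1) : Irreducible (X ^ n - C a : K[X]) := by
  have hne : X ^ n - C a ≠ 0 := X_pow_sub_C_ne_zero (Nat.pos_of_ne_zero hn) a
  have hunit : ¬IsUnit (X ^ n - C a) := by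
    rw [isUnit_iff_degree_eq_zero, degree_X_pow_sub_C (Nat.pos_of_ne_zero hn)]
    exact_mod_cast hn
  obtain ⟨f, hf, hfa⟩ := WfDvdMonoid.exists_irreducible_factor hunit hne
  have hdeg := Nat.le_of_dvd hf.natDegree_pos
    (dvd_natDegree_of_dvd_X_pow_sub_C ha hn hprime h4 hf hfa)
  exact (associated_of_dvd_of_natDegree_le hfa hne
    (natDegree_X_pow_sub_C.trans_le hdeg)).irreducible hf

end FiniteField

theorem moriPolyMod_self (g p : ℕ) (b c : ℤ) :
    moriPolyMod g p b c p = X * (X ^ (2 * g) - C (b : ZMod p)) := by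
  simp only [moriPolyMod, ZMod.natCast_self, zero_mul, map_zero, sub_zero]
  ring

/-- Theorem (Mori): the reduction of a Mori trinomial modulo `p` equals `x·(x^(2g) - b̄)`
in `𝔽_p[x]`, and the degree-`2g` factor `x^(2g) - b̄` is irreducible over `𝔽_p`. -/
theorem mori_trinomial_reduction_mod_p
    (g p : ℕ) (b c : ℤ) (h : IsMoriQuadruple g p b c) :
    moriPolyMod g p b c p = X * (X ^ (2 * g) - C (b : ZMod p)) ∧
    Irreducible (X ^ (2 * g) - C (b : ZMod p) : (ZMod p)[X]) := by
  obtain ⟨hg, hp, hpodd, hdiv, hord, -⟩ := h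
  have : Fact p.Prime := ⟨hp⟩
  have hp2 : 2 ∣ p - 1 := by obtain ⟨k, rfl⟩ := hpodd; simp
  have hprime (q : ℕ) (hq : q.Prime) (hqg : q ∣ 2 * g) : q ∣ p - 1 := by
    rcases hq.dvd_mul.mp hqg with h2 | hqg
    · exact h2.trans hp2
    · exact (hdiv q hq hqg).trans (Nat.div_dvd_of_dvd hp2)
  have h4 (h4g : 4 ∣ 2 * g) : 4 ∣ p - 1 := by
    have := hdiv 2 Nat.prime_two (by omega)
    omega
  refine ⟨moriPolyMod_self g p b c, ?_⟩
  exact FiniteField.X_pow_sub_C_irreducible_of_orderOf_eq (by rwa [ZMod.card]) (by omega)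
    (by rwa [ZMod.card]) (by rwa [ZMod.card])
end
end

section
/- Let f(x) = x^{2g+1} - b·x - (p·c)/4 ∈ ℤ[1/2][x] be a Mori trinomial. Then for every odd prime ℓ, the reduction f(x) mod ℓ ∈ 𝔽_ℓ[x] has at most one multiple root in an algebraic closure of 𝔽_ℓ; if such a multiple root exists, it is a double root (multiplicity exactly 2) and it lies in 𝔽_ℓ. -/
/-!
At a multiple root `x` of `f = X ^ n - B X - A` we have `x ^ n = B x + A` and `n x ^ (n - 1) = B`;
multiplying the second equation by `x` and eliminating `x ^ n` gives the linear relation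
`x B (1 - n) = n A`. For a Mori quadruple and `n = 2g + 1`, if `B (1 - n) ≡ 0 (mod ℓ)` then either
`ℓ ∣ b`, which rules out `ℓ ∣ (2g + 1) p c`, or `ℓ ∣ g`, which rules out `ℓ ∣ p c`; either way
`n A ≢ 0`, contradicting the relation. So `x = n A / (B (1 - n))` is unique and lies in `𝔽_ℓ`.
A triple root would also be a root of `f'' = n (n - 1) X ^ (n - 2)`, forcing `x = 0` (as
`n ≢ 0, 1`) and then `B = n x ^ (n - 1) = 0`.
-/

open Polynomial

noncomputable section

section Trinomial

variable {K : Type*} [Field K] {n : ℕ} {A B : K}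

theorem monic_X_pow_sub_C_mul_X_sub_C (hn : 2 ≤ n) : (X ^ n - C B * X - C A).Monic := by
  rw [sub_sub]
  refine (monic_X_pow n).sub_of_left ?_
  rw [degree_X_pow]
  exact degree_linear_le.trans_lt (by exact_mod_cast hn)

theorem derivative_X_pow_sub_C_mul_X_sub_C :
    derivative (X ^ n - C B * X - C A) = C (n : K) * X ^ (n - 1) - C B := by
  simp [derivative_X_pow]

theorem mul_one_sub_eq_of_isRoot_derivative (hn : n ≠ 0) {x : K}
    (hx : (X ^ n - C B * X - C A).IsRoot x)
    (hx' : (derivative (X ^ n - C B * X - C A)).IsRoot x) :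
    x * (B * (1 - n)) = n * A := by
  rw [derivative_X_pow_sub_C_mul_X_sub_C] at hx'
  simp only [IsRoot, eval_sub, eval_mul, eval_pow, eval_C, eval_X] at hx hx'
  linear_combination n * hx - x * hx' + n * mul_pow_sub_one hn x

theorem rootMultiplicity_X_pow_sub_C_mul_X_sub_C_le_two (hn : 2 ≤ n) (hB : B ≠ 0)
    (hn1 : (n : K) ≠ 1) (x : K) : (X ^ n - C B * X - C A).rootMultiplicity x ≤ 2 := by
  by_contra! h3
  have hx' : (derivative (X ^ n - C B * X - C A)).IsRoot x :=
    isRoot_iterate_derivative_of_lt_rootMultiplicity (n := 1) (by omega)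
  have hx'' : (derivative (derivative (X ^ n - C B * X - C A))).IsRoot x :=
    isRoot_iterate_derivative_of_lt_rootMultiplicity (n := 2) h3
  rw [derivative_X_pow_sub_C_mul_X_sub_C] at hx' hx''
  simp only [derivative_sub, derivative_C_mul_X_pow,
    derivative_C, sub_zero, IsRoot, eval_sub, eval_mul, eval_pow, eval_C, eval_X] at hx' hx''
  rcases mul_eq_zero.mp hx'' with hcoeff | hx0
  · rcases mul_eq_zero.mp hcoeff with hn0 | hn1'
    · exact hB (by simpa [hn0] using hx')
    · exact hn1 (by rw [Nat.cast_sub (by omega), Nat.cast_one, sub_eq_zero] at hn1'; exact hn1')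
  · rw [eq_zero_of_pow_eq_zero hx0, zero_pow (by omega), mul_zero, zero_sub, neg_eq_zero] at hx'
    exact hB hx'

theorem rootMultiplicity_X_pow_sub_C_mul_X_sub_C_eq_two (hn : 2 ≤ n) (hBn : B * (1 - n) ≠ 0)
    {x : K} (hx : 2 ≤ (X ^ n - C B * X - C A).rootMultiplicity x) :
    (X ^ n - C B * X - C A).rootMultiplicity x = 2 ∧ x = n * A / (B * (1 - n)) := by
  obtain ⟨hB, hn1⟩ := mul_ne_zero_iff.mp hBn
  refine ⟨?_, ?_⟩
  · exact (rootMultiplicity_X_pow_sub_C_mul_X_sub_C_le_two hn hB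
      (sub_ne_zero.mp hn1).symm x).antisymm hx
  obtain ⟨hroot, hroot'⟩ :=
    (one_lt_rootMultiplicity_iff_isRoot (monic_X_pow_sub_C_mul_X_sub_C hn).ne_zero).mp hx
  rw [eq_div_iff hBn]
  exact mul_one_sub_eq_of_isRoot_derivative (by omega) hroot hroot'

theorem rootMultiplicity_map_X_pow_sub_C_mul_X_sub_C_eq_two {k L : Type*} [Field k] [Field L]
    [Algebra k L] {A B : k} (hn : 2 ≤ n) (hnd : B * (1 - n) = 0 → n * A ≠ 0) {x : L}
    (hx : 2 ≤ ((X ^ n - C B * X - C A).map (algebraMap k L)).rootMultiplicity x) :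
    ((X ^ n - C B * X - C A).map (algebraMap k L)).rootMultiplicity x = 2 ∧
      x = algebraMap k L (n * A / (B * (1 - n))) := by
  simp only [Polynomial.map_sub, Polynomial.map_mul, Polynomial.map_pow, map_X, map_C] at hx ⊢
  have hmap : algebraMap k L (B * (1 - n)) = algebraMap k L B * (1 - n) := by simp
  have hBn : B * (1 - n) ≠ 0 := by
    intro hBn
    obtain ⟨hroot, hroot'⟩ :=
      (one_lt_rootMultiplicity_iff_isRoot (monic_X_pow_sub_C_mul_X_sub_C hn).ne_zero).mp hx
    apply hnd hBn
    apply (algebraMap k L).injective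
    rw [map_zero, map_mul, map_natCast,
      ← mul_one_sub_eq_of_isRoot_derivative (by omega) hroot hroot', ← hmap, hBn, map_zero,
      mul_zero]
  have hBn' : algebraMap k L B * (1 - n) ≠ 0 := by
    rw [← hmap]
    exact (_root_.map_ne_zero _).mpr hBn
  rw [map_div₀, hmap, map_mul, map_natCast]
  exact rootMultiplicity_X_pow_sub_C_mul_X_sub_C_eq_two hn hBn' hx

end Trinomial

theorem IsCoprime.intCast_ne_zero_of_eq_zero {R : Type*} [CommRing R] [Nontrivial R] {u v : ℤ}
    (h : IsCoprime u v) (hu : (u : R) = 0) : (v : R) ≠ 0 := by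
  have h' := h.map (Int.castRingHom R)
  rw [eq_intCast, hu, isCoprime_zero_left] at h'
  exact h'.ne_zero

theorem ZMod.dvd_of_natCast_two_mul_add_one_eq_one {ℓ : ℕ} [Fact ℓ.Prime] (hℓ : ℓ ≠ 2) {g : ℕ}
    (h : ((2 * g + 1 : ℕ) : ZMod ℓ) = 1) : ℓ ∣ g := by
  have h2g : ((2 * g : ℕ) : ZMod ℓ) = 0 := by
    push_cast at h ⊢
    linear_combination h
  rw [ZMod.natCast_eq_zero_iff] at h2g
  exact (Nat.Prime.dvd_mul Fact.out).mp h2g |>.resolve_left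
    fun h2 => hℓ ((Nat.prime_dvd_prime_iff_eq Fact.out Nat.prime_two).mp h2)

namespace IsMoriQuadruple

variable {g p : ℕ} {b c : ℤ} (h : IsMoriQuadruple g p b c) {ℓ : ℕ} [Fact ℓ.Prime]
include h

theorem natCast_ne_zero_of_intCast_eq_zero (hb : (b : ZMod ℓ) = 0) : (p : ZMod ℓ) ≠ 0 := by
  obtain ⟨-, hp, -, -, hord, -⟩ := h
  intro hp0
  obtain rfl : ℓ = p :=
    (Nat.prime_dvd_prime_iff_eq Fact.out hp).mp ((ZMod.natCast_eq_zero_iff p ℓ).mp hp0)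
  rw [hb, orderOf_zero] at hord
  have := hp.two_le
  omega

theorem natCast_ne_zero_of_dvd (hℓg : ℓ ∣ g) : (p : ZMod ℓ) ≠ 0 := by
  obtain ⟨-, hp, hpodd, hdiv, -⟩ := h
  have hℓp1 : ℓ ∣ p - 1 :=
    (hdiv ℓ Fact.out hℓg).trans (Nat.div_dvd_of_dvd (Nat.Odd.sub_odd hpodd odd_one).two_dvd)
  rw [Ne, ZMod.natCast_eq_zero_iff]
  intro hℓp
  have hℓ1 := Nat.dvd_sub hℓp hℓp1
  rw [Nat.sub_sub_self hp.one_le, Nat.dvd_one] at hℓ1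
  exact (Fact.out : ℓ.Prime).one_lt.ne' hℓ1

theorem mul_ne_zero_of_mul_one_sub_eq_zero (hℓ : ℓ ≠ 2)
    (hdeg : (b : ZMod ℓ) * (1 - ((2 * g + 1 : ℕ) : ZMod ℓ)) = 0) :
    ((2 * g + 1 : ℕ) : ZMod ℓ) * ((p : ZMod ℓ) * c * 4⁻¹) ≠ 0 := by
  have h4 : (4 : ZMod ℓ) ≠ 0 := by
    have h2 : (2 : ZMod ℓ) ≠ 0 := Ring.two_ne_zero (by rwa [ZMod.ringChar_zmod_n])
    simpa [show (4 : ZMod ℓ) = 2 * 2 by norm_num] using h2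
  have ⟨_, _, _, _, _, _, hbc, hbn, hcg⟩ := h
  suffices ((2 * g + 1 : ℕ) : ZMod ℓ) ≠ 0 ∧ (p : ZMod ℓ) ≠ 0 ∧ (c : ZMod ℓ) ≠ 0 by
    obtain ⟨hn, hp, hc⟩ := this
    exact mul_ne_zero hn (mul_ne_zero (mul_ne_zero hp hc) (inv_ne_zero h4))
  rcases mul_eq_zero.mp hdeg with hb | hn1
  · refine ⟨?_, h.natCast_ne_zero_of_intCast_eq_zero hb, hbc.intCast_ne_zero_of_eq_zero hb⟩
    exact_mod_cast hbn.intCast_ne_zero_of_eq_zero hb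
  · have hℓg := ZMod.dvd_of_natCast_two_mul_add_one_eq_one hℓ (sub_eq_zero.mp hn1).symm
    refine ⟨by rw [← sub_eq_zero.mp hn1]; exact one_ne_zero,
      h.natCast_ne_zero_of_dvd hℓg, hcg.symm.intCast_ne_zero_of_eq_zero ?_⟩
    exact_mod_cast (ZMod.natCast_eq_zero_iff g ℓ).mpr hℓg

end IsMoriQuadruple

/-- For a Mori trinomial `f` and every odd prime `ℓ`, the reduction `f mod ℓ ∈ 𝔽_ℓ[x]`
has at most one multiple root in an algebraic closure of `𝔽_ℓ`; if such a root exists,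
it has multiplicity exactly `2` and lies in `𝔽_ℓ`. -/
theorem mori_trinomial_at_most_one_double_root_mod_ell
    (g p : ℕ) (b c : ℤ) (h : IsMoriQuadruple g p b c)
    (ℓ : ℕ) [Fact ℓ.Prime] (hℓ : ℓ ≠ 2) :
    ∀ x : AlgebraicClosure (ZMod ℓ),
      2 ≤ ((moriPolyMod g p b c ℓ).map
            (algebraMap (ZMod ℓ) (AlgebraicClosure (ZMod ℓ)))).rootMultiplicity x →
        ((moriPolyMod g p b c ℓ).map
            (algebraMap (ZMod ℓ) (AlgebraicClosure (ZMod ℓ)))).rootMultiplicity x = 2 ∧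
        (∃ x₀ : ZMod ℓ, algebraMap (ZMod ℓ) (AlgebraicClosure (ZMod ℓ)) x₀ = x) ∧
        (∀ y : AlgebraicClosure (ZMod ℓ),
          2 ≤ ((moriPolyMod g p b c ℓ).map
                (algebraMap (ZMod ℓ) (AlgebraicClosure (ZMod ℓ)))).rootMultiplicity y →
            y = x) := by
  have hn : 2 ≤ 2 * g + 1 := by have := h.1; omega
  have hnd := h.mul_ne_zero_of_mul_one_sub_eq_zero hℓ
  intro x hx
  obtain ⟨hx2, hxeq⟩ := rootMultiplicity_map_X_pow_sub_C_mul_X_sub_C_eq_two hn hnd hx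
  exact ⟨hx2, ⟨_, hxeq.symm⟩,
    fun y hy => (rootMultiplicity_map_X_pow_sub_C_mul_X_sub_C_eq_two hn hnd hy).2.trans hxeq.symm⟩
end
end

section
/- Let f(x) = x^{2g+1} - b·x - (p·c)/4 ∈ ℤ[1/2][x] be a Mori trinomial. Then there exists an odd prime ℓ ≠ p such that the reduction f(x) mod ℓ ∈ 𝔽_ℓ[x] has a double root ᾱ ∈ 𝔽_ℓ (a root of multiplicity exactly 2), and all other roots of f(x) mod ℓ in an algebraic closure of 𝔽_ℓ are simple. -/
open Polynomial

noncomputable section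

/-!
Up to sign and a power of `2`, the discriminant of `f` is
`D = (2g+1)^(2g+1) (pc)^(2g) - (8g)^(2g) b^(2g+1)`. This `D` is odd, and
`D ≡ -(8g)^(2g) b^(2g+1) (mod p)` where `b^(2g+1)` is a non-square because `b` is a primitive root.
That rules out `p ∣ D` and `D = -1`, and also `D = 1`: then `D ≡ 2g+1 (mod 4)` makes `g` even, so
`p ≡ 1 (mod 4)` and `-1` is a square mod `p`. Hence `D` has a prime factor `ℓ ∉ {2, p}`, and the
coprimality conditions make both terms of `D` units mod `ℓ`.

For `f = X^(m+1) - B X - A` over a field, `X f' - (m+1) f = m B X + (m+1) A`. At a common root `α`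
of `f` and `f'` the right side vanishes, so it equals `m B (X - α)`; writing `f = (X - α)^2 h` and
cancelling `X - α` leaves a Bézout relation between `h` and `h'` with constant right side `m B`,
so `h` is separable and `h(α) ≠ 0`.
-/

namespace Polynomial

theorem X_sub_C_sq_dvd_of_isRoot_derivative {R : Type*} [CommRing R] {f : R[X]} {a : R}
    (hf : f.IsRoot a) (hf' : (derivative f).IsRoot a) : (X - C a) ^ 2 ∣ f := by
  obtain ⟨q, rfl⟩ := dvd_iff_isRoot.mpr hf
  have hq : q.IsRoot a := by simpa [derivative_mul] using hf'
  rw [sq]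
  exact mul_dvd_mul_left _ (dvd_iff_isRoot.mpr hq)

section Trinomial

variable {R : Type*} [CommRing R] (m : ℕ) (B A : R)

theorem derivative_X_pow_succ_sub_C_mul_X_sub_C :
    derivative (X ^ (m + 1) - C B * X - C A) = C ((m + 1 : ℕ) : R) * X ^ m - C B := by
  simp

theorem X_mul_derivative_X_pow_succ_sub_C_mul_X_sub_C :
    X * derivative (X ^ (m + 1) - C B * X - C A)
        - C ((m + 1 : ℕ) : R) * (X ^ (m + 1) - C B * X - C A)
      = C (m * B) * X + C ((m + 1 : ℕ) * A) := by
  rw [derivative_X_pow_succ_sub_C_mul_X_sub_C]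
  simp only [C_mul, Nat.cast_succ, C_add, C_1]
  ring

end Trinomial

theorem exists_eq_X_sub_C_sq_mul_separable_of_isRoot_derivative {K : Type*} [Field K]
    {m : ℕ} {B A α : K} (hmB : (m : K) * B ≠ 0)
    (hf : (X ^ (m + 1) - C B * X - C A).IsRoot α)
    (hf' : (derivative (X ^ (m + 1) - C B * X - C A)).IsRoot α) :
    ∃ h : K[X], X ^ (m + 1) - C B * X - C A = (X - C α) ^ 2 * h ∧
      h.eval α ≠ 0 ∧ h.Separable := by
  have hid := X_mul_derivative_X_pow_succ_sub_C_mul_X_sub_C m B A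
  obtain ⟨h, hfh⟩ := X_sub_C_sq_dvd_of_isRoot_derivative hf hf'
  have hα : (m : K) * B * α = -((m + 1 : ℕ) * A) := by
    have := congrArg (eval α) hid
    simp only [eval_sub, eval_add, eval_mul, eval_X, eval_C, hf.eq_zero, hf'.eq_zero] at this
    linear_combination -this
  have hbezout : h * (C 2 * X - C ((m + 1 : ℕ) : K) * (X - C α))
      + derivative h * (X * (X - C α)) = C ((m : K) * B) := by
    apply mul_left_cancel₀ (X_sub_C_ne_zero α)
    have hlin : C ((m : K) * B) * X + C (((m + 1 : ℕ) : K) * A)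
        = C ((m : K) * B) * (X - C α) := by
      rw [← neg_neg (((m + 1 : ℕ) : K) * A), ← hα]
      simp only [map_neg, map_mul]
      ring
    rw [hfh, derivative_mul, hlin] at hid
    simp only [derivative_pow, derivative_sub, derivative_X, derivative_C] at hid
    linear_combination hid
  refine ⟨h, hfh, fun h0 => ?_, ?_⟩
  · have := congrArg (eval α) hbezout
    simp only [eval_add, eval_mul, eval_sub, eval_X, eval_C, h0, sub_self, zero_mul, mul_zero,
      add_zero] at this
    exact hmB this.symm
  · refine ⟨C ((m : K) * B)⁻¹ * (C 2 * X - C ((m + 1 : ℕ) : K) * (X - C α)),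
      C ((m : K) * B)⁻¹ * (X * (X - C α)), ?_⟩
    have hinv : C ((m : K) * B)⁻¹ * C ((m : K) * B) = 1 := by
      rw [← C_mul, inv_mul_cancel₀ hmB, C_1]
    linear_combination C ((m : K) * B)⁻¹ * hbezout + hinv

theorem exists_common_root_of_discr {K : Type*} [Field K] {m : ℕ} {B A : K}
    (hmB : (m : K) * B ≠ 0)
    (hdisc : ((m + 1 : ℕ) : K) ^ (m + 1) * (-A) ^ m = (m : K) ^ m * B ^ (m + 1)) :
    ∃ α : K, α ^ (m + 1) - B * α - A = 0 ∧ ((m + 1 : ℕ) : K) * α ^ m - B = 0 := by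
  have hm : (m : K) ≠ 0 := left_ne_zero_of_mul hmB
  have hB : B ≠ 0 := right_ne_zero_of_mul hmB
  have hm1 : ((m + 1 : ℕ) : K) ≠ 0 := by
    rintro h0
    rw [h0, zero_pow m.succ_ne_zero, zero_mul] at hdisc
    exact mul_ne_zero (pow_ne_zero m hm) (pow_ne_zero _ hB) hdisc.symm
  set α := -(((m + 1 : ℕ) : K) * A) / ((m : K) * B) with hα
  have hlin : (m : K) * B * α + ((m + 1 : ℕ) : K) * A = 0 := by
    rw [hα]
    field_simp
    ring
  have hderiv : ((m + 1 : ℕ) : K) * α ^ m - B = 0 := by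
    rw [hα, div_pow, ← mul_neg, mul_pow]
    field_simp
    linear_combination hdisc
  refine ⟨α, mul_left_cancel₀ hm1 ?_, hderiv⟩
  push_cast at hlin hderiv ⊢
  linear_combination α * hderiv - hlin

theorem exists_eq_X_sub_C_sq_mul_separable_of_discr {K : Type*} [Field K] {m : ℕ} {B A : K}
    (hmB : (m : K) * B ≠ 0)
    (hdisc : ((m + 1 : ℕ) : K) ^ (m + 1) * (-A) ^ m = (m : K) ^ m * B ^ (m + 1)) :
    ∃ α : K, ∃ h : K[X], X ^ (m + 1) - C B * X - C A = (X - C α) ^ 2 * h ∧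
      h.eval α ≠ 0 ∧ h.Separable := by
  obtain ⟨α, hα, hα'⟩ := exists_common_root_of_discr hmB hdisc
  refine ⟨α, exists_eq_X_sub_C_sq_mul_separable_of_isRoot_derivative hmB ?_ ?_⟩
  · simpa [IsRoot] using hα
  · simpa [IsRoot, derivative_X_pow_succ_sub_C_mul_X_sub_C] using hα'

end Polynomial

theorem ZMod.not_isSquare_pow_of_orderOf_eq {p : ℕ} [Fact p.Prime] (hp : p ≠ 2) {a : ZMod p}
    (ha : orderOf a = p - 1) {n : ℕ} (hn : Odd n) : ¬IsSquare (a ^ n) := by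
  obtain ⟨k, hk⟩ := (Fact.out : p.Prime).odd_of_ne_two hp
  have hp2 := (Fact.out : p.Prime).two_le
  have ha0 : a ≠ 0 := by
    rintro rfl
    rw [orderOf_zero] at ha
    omega
  rw [ZMod.euler_criterion p (pow_ne_zero n ha0), ← pow_mul]
  intro h1
  have hdvd : 2 * k ∣ n * k := by
    have := orderOf_dvd_of_pow_eq_one h1
    rwa [ha, hk, show (2 * k + 1) / 2 = k by omega, Nat.add_sub_cancel] at this
  exact Nat.not_even_iff_odd.mpr hn
    (even_iff_two_dvd.mpr (Nat.dvd_of_mul_dvd_mul_right (by omega) hdvd))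

theorem Int.sq_cast_zmod_four_eq_one_of_odd {x : ℤ} (hx : Odd x) : (x : ZMod 4) ^ 2 = 1 := by
  rw [← Int.cast_pow, ← ZMod.intCast_mod, Nat.cast_ofNat, Int.sq_mod_four_eq_one_of_odd hx, Int.cast_one]

def moriDiscr (g p : ℕ) (b c : ℤ) : ℤ :=
  (2 * g + 1) ^ (2 * g + 1) * (p * c) ^ (2 * g) - (8 * g) ^ (2 * g) * b ^ (2 * g + 1)

theorem moriDiscr_cast_zmod_self {g : ℕ} (hg : 0 < g) (p : ℕ) (b c : ℤ) :
    (moriDiscr g p b c : ZMod p) = -((8 * g : ZMod p) ^ g) ^ 2 * (b : ZMod p) ^ (2 * g + 1) := by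
  simp only [moriDiscr, Int.cast_sub, Int.cast_mul, Int.cast_pow, Int.cast_natCast,
    ZMod.natCast_self, zero_mul, zero_pow (by omega : 2 * g ≠ 0)]
  push_cast
  ring

namespace IsMoriQuadruple

variable {g p : ℕ} {b c : ℤ}

theorem cast_b_ne_zero (h : IsMoriQuadruple g p b c) : (b : ZMod p) ≠ 0 := by
  obtain ⟨-, hp, -, -, hord, -⟩ := h
  have := Fact.mk hp
  rintro h0
  rw [h0, orderOf_zero] at hord
  have := hp.two_le
  omega

theorem not_dvd_g (h : IsMoriQuadruple g p b c) : ¬p ∣ g := by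
  obtain ⟨hg, hp, hpodd, hdvd, -⟩ := h
  intro hpg
  have := hp.two_le
  have := Nat.le_of_dvd (by obtain ⟨k, hk⟩ := hpodd; omega) (hdvd p hp hpg)
  omega

theorem mod_four_eq_one_of_even (h : IsMoriQuadruple g p b c) (hg : Even g) : p % 4 = 1 := by
  obtain ⟨-, hp, ⟨k, hk⟩, hdvd, -⟩ := h
  have := hdvd 2 Nat.prime_two (even_iff_two_dvd.mp hg)
  omega

theorem cast_eight_mul_g_ne_zero (h : IsMoriQuadruple g p b c) : (8 * g : ZMod p) ≠ 0 := by
  have hpg := h.not_dvd_g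
  obtain ⟨-, hp, hpodd, -⟩ := h
  have h8g : ((8 * g : ℕ) : ZMod p) ≠ 0 := by
    rw [Ne, ZMod.natCast_eq_zero_iff]
    intro hdvd
    rcases (Nat.Prime.dvd_mul hp).mp hdvd with h8 | hg
    · have h2 := (Nat.prime_dvd_prime_iff_eq hp Nat.prime_two).mp
        (hp.dvd_of_dvd_pow (show p ∣ 2 ^ 3 from h8))
      subst h2
      exact (Nat.not_odd_iff_even.mpr even_two) hpodd
    · exact hpg hg
  exact_mod_cast h8g

theorem moriDiscr_odd (h : IsMoriQuadruple g p b c) : Odd (moriDiscr g p b c) := by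
  obtain ⟨hg, -, hpodd, -, -, hcodd, -⟩ := h
  have hT1 : Odd ((2 * g + 1 : ℤ) ^ (2 * g + 1) * (p * c) ^ (2 * g)) :=
    (Odd.pow (⟨g, rfl⟩ : Odd (2 * g + 1 : ℤ))).mul ((hpodd.natCast.mul hcodd).pow)
  have hT2 : Even ((8 * g : ℤ) ^ (2 * g) * b ^ (2 * g + 1)) :=
    (Even.pow_of_ne_zero ⟨4 * (g : ℤ), by ring⟩ (by omega : 2 * g ≠ 0)).mul_right _
  exact hT1.sub_even hT2

theorem moriDiscr_cast_zmod_four (h : IsMoriQuadruple g p b c) :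
    (moriDiscr g p b c : ZMod 4) = 2 * g + 1 := by
  obtain ⟨hg, -, hpodd, -, -, hcodd, -⟩ := h
  have hn := Int.sq_cast_zmod_four_eq_one_of_odd (⟨g, rfl⟩ : Odd (2 * g + 1 : ℤ))
  have hpc := Int.sq_cast_zmod_four_eq_one_of_odd (hpodd.natCast.mul hcodd)
  have h8 : (8 : ZMod 4) = 0 := rfl
  push_cast at hn hpc
  simp only [moriDiscr]
  push_cast
  rw [h8, zero_mul, zero_pow (by omega : 2 * g ≠ 0), zero_mul, sub_zero, pow_succ, pow_mul, pow_mul,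
    hn, hpc, one_pow, one_mul, mul_one]

theorem even_of_moriDiscr_eq_one (h : IsMoriQuadruple g p b c) (hD : moriDiscr g p b c = 1) :
    Even g := by
  have h4 := h.moriDiscr_cast_zmod_four
  rw [hD, Int.cast_one] at h4
  have h2g : ((2 * g : ℕ) : ZMod 4) = 0 := by
    push_cast
    linear_combination -h4
  rw [ZMod.natCast_eq_zero_iff] at h2g
  exact even_iff_two_dvd.mpr (by omega)

theorem moriDiscr_cast_ne (h : IsMoriQuadruple g p b c) {ε : ZMod p} (hε : IsSquare (-ε)) :
    (moriDiscr g p b c : ZMod p) ≠ ε := by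
  have h8g := h.cast_eight_mul_g_ne_zero
  obtain ⟨hg, hp, hpodd, -, hord, -⟩ := h
  have := Fact.mk hp
  rw [moriDiscr_cast_zmod_self hg]
  intro hD
  set y := (8 * g : ZMod p) ^ g
  set bn := (b : ZMod p) ^ (2 * g + 1)
  have hsq : IsSquare bn := by
    have hy : y⁻¹ ^ 2 * y ^ 2 = 1 := by
      rw [← mul_pow, inv_mul_cancel₀ (pow_ne_zero g h8g), one_pow]
    have hbn : bn = -ε * y⁻¹ ^ 2 := by linear_combination -bn * hy - y⁻¹ ^ 2 * hD
    rw [hbn]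
    exact hε.mul (IsSquare.sq y⁻¹)
  have hp2 : p ≠ 2 := by
    rintro rfl
    exact (Nat.not_odd_iff_even.mpr even_two) hpodd
  exact ZMod.not_isSquare_pow_of_orderOf_eq hp2 hord ⟨g, rfl⟩ hsq

theorem natAbs_moriDiscr_ne_one (h : IsMoriQuadruple g p b c) :
    (moriDiscr g p b c).natAbs ≠ 1 := by
  have := Fact.mk h.2.1
  intro h1
  obtain hD | hD : moriDiscr g p b c = 1 ∨ moriDiscr g p b c = -1 := by omega
  · have hsq : IsSquare (-1 : ZMod p) := by
      rw [ZMod.exists_sq_eq_neg_one_iff, h.mod_four_eq_one_of_even (h.even_of_moriDiscr_eq_one hD)]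
      decide
    exact h.moriDiscr_cast_ne hsq (by rw [hD, Int.cast_one])
  · exact h.moriDiscr_cast_ne (ε := -1) (by simp) (by rw [hD]; simp)

theorem isCoprime_moriDiscr_terms (h : IsMoriQuadruple g p b c) :
    IsCoprime ((2 * g + 1 : ℤ) ^ (2 * g + 1) * (p * c) ^ (2 * g))
      ((8 * g : ℤ) ^ (2 * g) * b ^ (2 * g + 1)) := by
  have hpb : ¬(p : ℤ) ∣ b := by
    rw [← ZMod.intCast_zmod_eq_zero_iff_dvd]
    exact h.cast_b_ne_zero
  have hpg : ¬(p : ℤ) ∣ g := by exact_mod_cast h.not_dvd_g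
  obtain ⟨-, hp, hpodd, -, -, hcodd, hbc, hbn, hcg⟩ := h
  have hpZ := Nat.prime_iff_prime_int.mp hp
  have key : ∀ x : ℤ, Odd x → IsCoprime x g → IsCoprime x b →
      ∀ i j k : ℕ, IsCoprime (x ^ i) ((8 * g : ℤ) ^ j * b ^ k) := by
    intro x hx hxg hxb i j k
    have hx8 : IsCoprime x 8 := by
      simpa using (Int.isCoprime_two_right.mpr hx).pow_right (n := 3)
    exact (hx8.mul_right hxg).pow.mul_right hxb.pow
  refine (key _ ⟨g, rfl⟩ ⟨1, -2, by ring⟩ hbn.symm _ _ _).mul_left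
    (key _ (hpodd.natCast.mul hcodd) ?_ ?_ _ _ _)
  · exact (hpZ.coprime_iff_not_dvd.mpr hpg).mul_left hcg
  · exact (hpZ.coprime_iff_not_dvd.mpr hpb).mul_left hbc.symm

theorem exists_prime_dvd_moriDiscr (h : IsMoriQuadruple g p b c) :
    ∃ ℓ : ℕ, ℓ.Prime ∧ ℓ ≠ 2 ∧ ℓ ≠ p ∧ (ℓ : ℤ) ∣ moriDiscr g p b c := by
  obtain ⟨ℓ, hℓ, hdvd⟩ := Nat.exists_prime_and_dvd h.natAbs_moriDiscr_ne_one
  refine ⟨ℓ, hℓ, ?_, ?_, Int.natCast_dvd.mpr hdvd⟩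
  · rintro rfl
    exact Int.not_even_iff_odd.mpr h.moriDiscr_odd
      (even_iff_two_dvd.mpr (Int.natCast_dvd.mpr hdvd))
  · rintro rfl
    exact h.moriDiscr_cast_ne (ε := 0) (by simp)
      ((ZMod.intCast_zmod_eq_zero_iff_dvd _ _).mpr (Int.natCast_dvd.mpr hdvd))

theorem exists_double_root_of_dvd_moriDiscr (h : IsMoriQuadruple g p b c) {ℓ : ℕ} [Fact ℓ.Prime]
    (hdvd : (ℓ : ℤ) ∣ moriDiscr g p b c) :
    ∃ α : ZMod ℓ, ∃ h₁ : (ZMod ℓ)[X],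
      moriPolyMod g p b c ℓ = (X - C α) ^ 2 * h₁ ∧ h₁.eval α ≠ 0 ∧ h₁.Separable := by
  have hT : (((2 * g + 1 : ℤ) ^ (2 * g + 1) * (p * c) ^ (2 * g) : ℤ) : ZMod ℓ)
      = (((8 * g : ℤ) ^ (2 * g) * b ^ (2 * g + 1) : ℤ) : ZMod ℓ) := by
    rw [← sub_eq_zero, ← Int.cast_sub, ZMod.intCast_zmod_eq_zero_iff_dvd]
    exact hdvd
  have hT2 : (((8 * g : ℤ) ^ (2 * g) * b ^ (2 * g + 1) : ℤ) : ZMod ℓ) ≠ 0 := by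
    have hcop := h.isCoprime_moriDiscr_terms.map (Int.castRingHom (ZMod ℓ))
    rw [eq_intCast, eq_intCast, hT, isCoprime_self] at hcop
    exact hcop.ne_zero
  have hg2 : 2 * g ≠ 0 := by have := h.1; omega
  set m : ZMod ℓ := ((2 * g : ℕ) : ZMod ℓ) with hm
  push_cast at hT hT2
  rw [show (8 : ZMod ℓ) * g = 4 * m by rw [hm]; push_cast; ring, mul_pow] at hT hT2
  have h4 : (4 : ZMod ℓ) ≠ 0 := ne_zero_pow hg2 (left_ne_zero_of_mul (left_ne_zero_of_mul hT2))
  have hm0 : m ≠ 0 := ne_zero_pow hg2 (right_ne_zero_of_mul (left_ne_zero_of_mul hT2))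
  have hb : (b : ZMod ℓ) ≠ 0 := ne_zero_pow (by omega) (right_ne_zero_of_mul hT2)
  have h44 : (4 : ZMod ℓ)⁻¹ ^ (2 * g) * 4 ^ (2 * g) = 1 := by
    rw [← mul_pow, inv_mul_cancel₀ h4, one_pow]
  refine exists_eq_X_sub_C_sq_mul_separable_of_discr (mul_ne_zero hm0 hb) ?_
  rw [Even.neg_pow ⟨g, by ring⟩, ← hm]
  push_cast
  linear_combination (4 : ZMod ℓ)⁻¹ ^ (2 * g) * hT + m ^ (2 * g) * (b : ZMod ℓ) ^ (2 * g + 1) * h44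

end IsMoriQuadruple

/-- For a Mori trinomial `f` there exists an odd prime `ℓ ≠ p` such that `f mod ℓ` has a
double root `α ∈ 𝔽_ℓ` (multiplicity exactly `2`) while all other roots of `f mod ℓ` in an
algebraic closure of `𝔽_ℓ` are simple: `f mod ℓ = (x-α)²·h` with `h(α) ≠ 0` and `h`
separable. -/
theorem mori_trinomial_exists_double_root_mod_ell
    (g p : ℕ) (b c : ℤ) (h : IsMoriQuadruple g p b c) :
    ∃ ℓ : ℕ, ℓ.Prime ∧ ℓ ≠ 2 ∧ ℓ ≠ p ∧
      ∃ α : ZMod ℓ, ∃ h₁ : (ZMod ℓ)[X],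
        moriPolyMod g p b c ℓ = (X - C α) ^ 2 * h₁ ∧
        h₁.eval α ≠ 0 ∧ h₁.Separable := by
  obtain ⟨ℓ, hℓ, hℓ2, hℓp, hdvd⟩ := h.exists_prime_dvd_moriDiscr
  have := Fact.mk hℓ
  exact ⟨ℓ, hℓ, hℓ2, hℓp, h.exists_double_root_of_dvd_moriDiscr hdvd⟩
end
end

section
/- Let u(x) = x^n + B·x + C ∈ ℤ[x] be a monic polynomial of degree n > 1 with B ≠ 0 and C ≠ 0. If u(x) has a multiple root (in an algebraic closure of ℚ), then n divides B and n−1 divides C. -/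
open Polynomial

noncomputable section

/-!
At a multiple root `x` both `u = X ^ n + B X + C` and `u' = n X ^ (n - 1) + B` vanish, and
`n u - X u' = (n - 1) B X + n C` shows that `x` is rational. Being a root of a monic integer
polynomial, `x` is then an integer `m`, and `B = -n m ^ (n - 1)`, `C = (n - 1) m ^ n`.
-/

section Trinomial

variable {R : Type*} [CommRing R] {n : ℕ} {b c x : R}

theorem monic_X_pow_add_C_mul_X_add_C (hn : 1 < n) : (X ^ n + C b * X + C c).Monic := by
  rw [add_assoc]
  exact monic_X_pow_add (degree_linear_le.trans_lt (by exact_mod_cast hn))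

theorem pow_add_mul_add_eq_zero_and_mul_pow_add_eq_zero_of_one_lt_rootMultiplicity
    (h : 1 < (X ^ n + C b * X + C c).rootMultiplicity x) :
    x ^ n + b * x + c = 0 ∧ n * x ^ (n - 1) + b = 0 := by
  have hroot := isRoot_iterate_derivative_of_lt_rootMultiplicity (n := 0) (zero_lt_one.trans h)
  have hderiv := isRoot_iterate_derivative_of_lt_rootMultiplicity h
  simp only [Function.iterate_zero, id, Function.iterate_one, IsRoot.def, derivative_add,
    derivative_X_pow, derivative_C_mul_X, derivative_C, eval_add, eval_pow, eval_mul, eval_C,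
    eval_X, add_zero] at hroot hderiv
  exact ⟨hroot, hderiv⟩

theorem sub_one_mul_mul_eq_neg_mul_of_pow_add_mul_add_eq_zero
    (hu : x ^ n + b * x + c = 0) (hu' : n * x ^ (n - 1) + b = 0) :
    ((n - 1) * b) * x = -(n * c) := by
  cases n with
  | zero => simp_all
  | succ k =>
    simp only [add_tsub_cancel_right, Nat.cast_add, Nat.cast_one] at hu' ⊢
    linear_combination (k + 1 : R) * hu - x * hu'

theorem dvd_of_pow_add_mul_add_eq_zero_of_mul_pow_add_eq_zero
    (hu : x ^ n + b * x + c = 0) (hu' : n * x ^ (n - 1) + b = 0) :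
    (n : R) ∣ b ∧ ((n : R) - 1) ∣ c := by
  cases n with
  | zero => simp_all
  | succ k =>
    simp only [add_tsub_cancel_right, Nat.cast_add, Nat.cast_one, add_sub_cancel_right] at hu' ⊢
    exact ⟨⟨-x ^ k, by linear_combination hu'⟩,
      ⟨x ^ (k + 1), by linear_combination hu - x * hu'⟩⟩

end Trinomial

theorem isIntegral_of_pow_add_mul_add_eq_zero {A : Type*} [CommRing A] {n : ℕ} {b c : ℤ} {y : A}
    (hn : 1 < n) (hy : y ^ n + b * y + c = 0) : IsIntegral ℤ y := by
  refine ⟨_, monic_X_pow_add_C_mul_X_add_C (b := b) (c := c) hn, ?_⟩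
  rw [eval₂_add, eval₂_add, eval₂_mul, eval₂_X_pow, eval₂_X, eval₂_C, eval₂_C]
  simpa only [eq_intCast] using hy

theorem exists_intCast_eq_of_isIntegral {K : Type*} [Field K] [CharZero K] {x : K}
    (hx : IsIntegral ℤ x) {k l : ℤ} (hk : k ≠ 0) (h : k * x = l) : ∃ m : ℤ, x = m := by
  have hxq : x = algebraMap ℚ K (l / k) := by
    rw [map_div₀, eq_div_iff (by simpa using hk)]
    simpa [mul_comm] using h
  rw [hxq, isIntegral_algebraMap_iff (algebraMap ℚ K).injective,
    IsIntegrallyClosed.isIntegral_iff] at hx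
  obtain ⟨m, hm⟩ := hx
  exact ⟨m, by rw [hxq, ← hm, eq_intCast, map_intCast]⟩

theorem trinomial_multiple_root_divisibility_general
    (n : ℕ) (hn : 1 < n) (B C : ℤ) (hB : B ≠ 0)
    (hmult : ∃ x : AlgebraicClosure ℚ,
      2 ≤ ((X ^ n + Polynomial.C B * X + Polynomial.C C : ℤ[X]).map
            (algebraMap ℤ (AlgebraicClosure ℚ))).rootMultiplicity x) :
    (n : ℤ) ∣ B ∧ ((n : ℤ) - 1) ∣ C := by
  obtain ⟨x, hx⟩ := hmult
  simp only [Polynomial.map_add, Polynomial.map_pow, Polynomial.map_mul, map_X, map_C] at hx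
  obtain ⟨hu, hu'⟩ :=
    pow_add_mul_add_eq_zero_and_mul_pow_add_eq_zero_of_one_lt_rootMultiplicity hx
  simp only [eq_intCast] at hu hu'
  obtain ⟨m, rfl⟩ := exists_intCast_eq_of_isIntegral
    (isIntegral_of_pow_add_mul_add_eq_zero hn hu) (k := (n - 1) * B) (l := -(n * C))
    (mul_ne_zero (by omega) hB)
    (by exact_mod_cast sub_one_mul_mul_eq_neg_mul_of_pow_add_mul_add_eq_zero hu hu')
  exact dvd_of_pow_add_mul_add_eq_zero_of_mul_pow_add_eq_zero
    (by exact_mod_cast hu) (by exact_mod_cast hu')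

/-- Key Lemma (1): if the monic trinomial `u(x) = x^n + B·x + C ∈ ℤ[x]` (with `n > 1`,
`B ≠ 0`, `C ≠ 0`) has a multiple root in an algebraic closure of `ℚ`, then `n ∣ B` and
`(n-1) ∣ C`. -/
theorem trinomial_multiple_root_divisibility
    (n : ℕ) (hn : 1 < n) (B C : ℤ) (hB : B ≠ 0) (hC : C ≠ 0)
    (hmult : ∃ x : AlgebraicClosure ℚ,
      2 ≤ ((X ^ n + Polynomial.C B * X + Polynomial.C C : ℤ[X]).map
            (algebraMap ℤ (AlgebraicClosure ℚ))).rootMultiplicity x) :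
    (n : ℤ) ∣ B ∧ ((n : ℤ) - 1) ∣ C :=
  trinomial_multiple_root_divisibility_general n hn B C hB hmult
end
end

section
/- Let f(x) = x^{2g+1} - b·x - (p·c)/4 be a Mori trinomial and let ũ(x) = 2^{2g+1}·f(x/2) = x^{2g+1} - 2^{2g}·b·x - 2^{2g-1}·p·c ∈ ℤ[x]. Then the discriminant of ũ satisfies Δ(ũ) = 2^{2g(2g−1)}·D₀, where D₀ = (−1)^g·[(2g+1)^{2g+1}·(pc)^{2g} − 2^{6g}·g^{2g}·b^{2g+1}]. Moreover, D₀ is an odd integer, D₀ is not divisible by p, and D₀ ≡ 1 (mod 4). -/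
open Polynomial

noncomputable section

/-- The rescaled Mori trinomial `ũ(x) = 2^(2g+1)·f(x/2)
= x^(2g+1) - 2^(2g)·b·x - 2^(2g-1)·p·c ∈ ℤ[x]`. -/
def moriPolyTilde (g p : ℕ) (b c : ℤ) : ℤ[X] :=
  X ^ (2 * g + 1) - C (2 ^ (2 * g) * b) * X - C (2 ^ (2 * g - 1) * (p : ℤ) * c)

/-- The discriminant of the trinomial `x^n + B·x + C`. -/
def trinomialDisc (R : Type*) [CommRing R] (n : ℕ) (B C : R) : R :=
  (-1) ^ (n * (n - 1) / 2) * (n : R) ^ n * C ^ (n - 1) +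
    (-1) ^ ((n - 1) * (n - 2) / 2) * ((n : R) - 1) ^ (n - 1) * B ^ n

/-- For a Mori trinomial `f` with `ũ(x) = 2^(2g+1)·f(x/2) ∈ ℤ[x]`, the discriminant of `ũ`
equals `2^(2g(2g-1))·D₀` with
`D₀ = (-1)^g·[(2g+1)^(2g+1)·(pc)^(2g) - 2^(6g)·g^(2g)·b^(2g+1)]`; moreover `D₀` is odd,
`D₀` is not divisible by `p`, and `D₀ ≡ 1 (mod 4)`. -/
theorem mori_trinomial_discriminant
    (g p : ℕ) (b c : ℤ) (h : IsMoriQuadruple g p b c) :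
    C ((2 : ℚ) ^ (2 * g + 1)) * (moriPoly g p b c).comp (C (2⁻¹ : ℚ) * X)
      = (moriPolyTilde g p b c).map (Int.castRingHom ℚ) ∧
    trinomialDisc ℤ (2 * g + 1) (-(2 ^ (2 * g) * b)) (-(2 ^ (2 * g - 1) * (p : ℤ) * c))
      = 2 ^ (2 * (g * (2 * g - 1))) *
        ((-1) ^ g * ((2 * (g : ℤ) + 1) ^ (2 * g + 1) * ((p : ℤ) * c) ^ (2 * g)
          - 2 ^ (6 * g) * (g : ℤ) ^ (2 * g) * b ^ (2 * g + 1))) ∧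
    Odd ((-1 : ℤ) ^ g * ((2 * (g : ℤ) + 1) ^ (2 * g + 1) * ((p : ℤ) * c) ^ (2 * g)
          - 2 ^ (6 * g) * (g : ℤ) ^ (2 * g) * b ^ (2 * g + 1))) ∧
    ¬ ((p : ℤ) ∣ (-1 : ℤ) ^ g * ((2 * (g : ℤ) + 1) ^ (2 * g + 1) * ((p : ℤ) * c) ^ (2 * g)
          - 2 ^ (6 * g) * (g : ℤ) ^ (2 * g) * b ^ (2 * g + 1))) ∧
    (4 : ℤ) ∣ ((-1 : ℤ) ^ g * ((2 * (g : ℤ) + 1) ^ (2 * g + 1) * ((p : ℤ) * c) ^ (2 * g)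
          - 2 ^ (6 * g) * (g : ℤ) ^ (2 * g) * b ^ (2 * g + 1)) - 1) := by
  obtain ⟨hg0, hp, hpo, hdiv, horder, hc, -, -, -⟩ := h
  refine ⟨?_, ?_, ?_, ?_, ?_⟩
  · -- Part 1: the polynomial identity
    obtain ⟨g', rfl⟩ : ∃ g', g = g' + 1 := ⟨g - 1, by omega⟩
    unfold moriPoly moriPolyTilde
    simp only [sub_comp, pow_comp, mul_comp, C_comp, X_comp, Polynomial.map_sub,
      Polynomial.map_mul, Polynomial.map_pow, map_X, map_C, mul_pow, mul_sub]
    have h1 : 2 * (g'+1) - 1 = 2*g'+1 := by omega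
    rw [h1]
    simp only [← C_pow, ← C_mul, ← mul_assoc, eq_intCast]
    rw [show ((2 ^ (2 * (g'+1)) * b : ℤ) : ℚ) = (2:ℚ)^(2*(g'+1)+1) * (b:ℚ) * 2⁻¹ by
        push_cast; rw [pow_succ]; ring,
      show ((2 ^ (2*g'+1) * (p:ℤ) * c : ℤ) : ℚ) = (2:ℚ)^(2*(g'+1)+1) * ((p:ℚ)*(c:ℚ)/4) by
        push_cast; rw [show 2*(g'+1)+1 = (2*g'+1)+2 by omega, pow_add]; ring,
      show (2:ℚ)^(2*(g'+1)+1) * 2⁻¹^(2*(g'+1)+1) = 1 by rw [← mul_pow]; norm_num,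
      map_one, one_mul]
  · -- Part 2: the discriminant identity
    obtain ⟨g', rfl⟩ : ∃ g', g = g' + 1 := ⟨g - 1, by omega⟩
    set g := g' + 1 with hg
    unfold trinomialDisc
    have d1 : 2 * g + 1 - 1 = 2 * g := by omega
    have d2 : 2 * g + 1 - 2 = 2 * g' + 1 := by omega
    have d3 : 2 * g - 1 = 2 * g' + 1 := by omega
    have e1 : (2 * g + 1) * (2 * g + 1 - 1) / 2 = g * (2 * g + 1) := by
      rw [d1, show (2*g+1) * (2*g) = 2 * (g * (2*g+1)) by ring]
      exact Nat.mul_div_cancel_left _ (by norm_num)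
    have e2 : (2 * g + 1 - 1) * (2 * g + 1 - 2) / 2 = g * (2 * g' + 1) := by
      rw [d1, d2, show (2*g) * (2*g'+1) = 2 * (g * (2*g'+1)) by ring]
      exact Nat.mul_div_cancel_left _ (by norm_num)
    have s1 : ((-1 : ℤ)) ^ (g * (2 * g + 1)) = (-1) ^ g := by
      rw [pow_mul', Odd.neg_one_pow ⟨g, by ring⟩]
    have s2 : ((-1 : ℤ)) ^ (g * (2 * g' + 1)) = (-1) ^ g := by
      rw [pow_mul', Odd.neg_one_pow ⟨g', by ring⟩]
    rw [e1, e2, s1, s2, d1, d3]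
    rw [Even.neg_pow (even_two_mul g), Odd.neg_pow (⟨g, by ring⟩ : Odd (2*g+1))]
    rw [show ((2*g+1 : ℕ) : ℤ) = 2*(g:ℤ)+1 by push_cast; ring]
    rw [show (2*(g:ℤ)+1-1) = 2*(g:ℤ) by ring]
    simp only [mul_pow, ← pow_mul]
    rw [hg]
    push_cast
    ring
  · -- Part 3: D₀ is odd
    have hpZ : Odd ((p : ℤ)) := by exact_mod_cast hpo
    have hA : Odd ((2 * (g:ℤ) + 1) ^ (2*g+1) * ((p:ℤ) * c) ^ (2*g)) :=
      (Odd.pow (⟨(g:ℤ), by ring⟩ : Odd (2*(g:ℤ)+1))).mul (Odd.pow (hpZ.mul hc))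
    have hB : Even ((2:ℤ) ^ (6*g) * (g:ℤ) ^ (2*g) * b ^ (2*g+1)) := by
      have : Even ((2:ℤ) ^ (6*g)) := by
        rw [show 6*g = (6*g-1)+1 by omega, pow_succ]
        exact ⟨2 ^ (6*g-1), by ring⟩
      exact (this.mul_right _).mul_right _
    exact (Odd.pow (⟨-1, by ring⟩ : Odd (-1:ℤ))).mul (hA.sub_even hB)
  · -- Part 4: p does not divide D₀
    haveI : Fact p.Prime := ⟨hp⟩
    have hp3 : 3 ≤ p := by
      rcases hpo with ⟨k, hk⟩
      have := hp.two_le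
      omega
    intro hdvd
    have hpZ : Prime ((p:ℤ)) := Nat.prime_iff_prime_int.mp hp
    have hA : (p:ℤ) ∣ (-1:ℤ)^g * ((2 * (g:ℤ) + 1) ^ (2*g+1) * ((p:ℤ) * c) ^ (2*g)) :=
      Dvd.dvd.mul_left (Dvd.dvd.mul_left (dvd_pow (dvd_mul_right _ _) (by omega)) _) _
    have hB : (p:ℤ) ∣ (-1:ℤ)^g * ((2:ℤ) ^ (6*g) * (g:ℤ) ^ (2*g) * b ^ (2*g+1)) := by
      have := dvd_sub hA hdvd
      rwa [mul_sub, sub_sub_cancel] at this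
    have hB' : (p:ℤ) ∣ (2:ℤ) ^ (6*g) * (g:ℤ) ^ (2*g) * b ^ (2*g+1) := by
      have h2 := hB.mul_left ((-1:ℤ)^g)
      rwa [← mul_assoc, ← mul_pow, neg_mul, one_mul, neg_neg, one_pow, one_mul] at h2
    rcases hpZ.dvd_mul.mp hB' with h1 | h1
    · rcases hpZ.dvd_mul.mp h1 with h2 | h2
      · have : (p:ℤ) ∣ 2 := hpZ.dvd_of_dvd_pow h2
        have : p ∣ 2 := by exact_mod_cast this
        have := Nat.le_of_dvd (by norm_num) this
        omega
      · have : (p:ℤ) ∣ (g:ℤ) := hpZ.dvd_of_dvd_pow h2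
        have hpg : p ∣ g := by exact_mod_cast this
        have := hdiv p hp hpg
        have := Nat.le_of_dvd (by omega) this
        omega
    · have hb : (p:ℤ) ∣ b := hpZ.dvd_of_dvd_pow h1
      have hb0 : (b : ZMod p) = 0 := (ZMod.intCast_zmod_eq_zero_iff_dvd b p).mpr hb
      have := pow_orderOf_eq_one (b : ZMod p)
      rw [horder, hb0, zero_pow (by omega : p - 1 ≠ 0)] at this
      exact zero_ne_one this
  · -- Part 5: D₀ ≡ 1 (mod 4)
    have h4 : (4 : ZMod 4) = 0 := by decide
    rw [show (4:ℤ) = ((4:ℕ):ℤ) by norm_num, ← ZMod.intCast_zmod_eq_zero_iff_dvd]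
    push_cast
    have h64 : ((2:ZMod 4)) ^ (6*g) = 0 := by
      rw [pow_mul, show (2:ZMod 4)^6 = 0 by decide, zero_pow (by omega : g ≠ 0)]
    have hpZ : Odd ((p : ℤ)) := by exact_mod_cast hpo
    obtain ⟨k, hk⟩ := hpZ.mul hc
    have hsq : ((p : ZMod 4) * (c : ZMod 4)) ^ 2 = 1 := by
      have : ((p : ZMod 4) * (c : ZMod 4)) = (((p:ℤ) * c : ℤ) : ZMod 4) := by push_cast; ring
      rw [this, hk]
      push_cast
      linear_combination ((k:ZMod 4)^2 + (k:ZMod 4)) * h4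
    have hmain : ((-1 : ZMod 4)) ^ g * (2 * (g : ZMod 4) + 1) ^ (2*g+1) = 1 := by
      have e : ((-1 : ZMod 4)) ^ g * (2 * (g : ZMod 4) + 1) ^ (2*g+1)
          = ((-1) ^ g * (2 * (g : ZMod 4) + 1)) ^ (2*g+1) := by
        rw [mul_pow, ← pow_mul, pow_mul', Odd.neg_one_pow (⟨g, by ring⟩ : Odd (2*g+1))]
      rw [e]
      have e2 : ((-1 : ZMod 4)) ^ g * (2 * (g : ZMod 4) + 1) = 1 := by
        rcases Nat.even_or_odd g with ⟨m, hm⟩ | ⟨m, hm⟩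
        · subst hm
          rw [Even.neg_one_pow ⟨m, rfl⟩]
          push_cast
          linear_combination (m : ZMod 4) * h4
        · subst hm
          rw [Odd.neg_one_pow ⟨m, rfl⟩]
          push_cast
          linear_combination (-(m : ZMod 4) - 1) * h4
      rw [e2, one_pow]
    calc (-1 : ZMod 4) ^ g * ((2 * (g:ZMod 4) + 1) ^ (2*g+1) * ((p:ZMod 4) * c) ^ (2*g)
            - 2 ^ (6*g) * (g:ZMod 4) ^ (2*g) * (b:ZMod 4) ^ (2*g+1)) - 1
        = ((-1:ZMod 4)) ^ g * (2 * (g:ZMod 4) + 1) ^ (2*g+1) * (((p:ZMod 4) * c) ^ 2) ^ g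
            - (-1)^g * ((2:ZMod 4)^(6*g) * (g:ZMod 4) ^ (2*g) * (b:ZMod 4) ^ (2*g+1)) - 1 := by
          rw [← pow_mul]; ring
      _ = 0 := by rw [hsq, h64, hmain]; ring
end
end
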